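/- (Itoh condition for modular unwrapping) Let λ > 0 and let f : ℤ → ℝ be a sequence such that |f(k+1) − f(k)| < λ for all k. Then the first-order difference of f can be recovered from the modulo samples: for all k, Δf(k) := f(k+1) − f(k) = M_λ(M_λ(f(k+1)) − M_λ(f(k))). -/

import Mathlib

/-!
`Mmod lam` is reduction modulo `2 * lam` into `[-lam, lam)`, i.e. `toIcoMod` with left endpoint
`-lam`. Reduction is additive modulo `2 * lam`, so the outer reduction turns the difference of
the reduced samples back into the reduction of `f (k + 1) - f k`; under the Itoh condition this
difference already lies in `[-lam, lam)` and is left unchanged.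
-/

noncomputable def Mmod (lam g : ℝ) : ℝ := 2 * lam * (Int.fract (g / (2 * lam) + 1 / 2) - 1 / 2)

theorem toIcoMod_sub_toIcoMod {α : Type*} [AddCommGroup α] [LinearOrder α] [IsOrderedAddMonoid α]
    [Archimedean α] {p : α} (hp : 0 < p) (a a₁ a₂ b c : α) :
    toIcoMod hp a (toIcoMod hp a₁ b - toIcoMod hp a₂ c) = toIcoMod hp a (b - c) :=
  (toIcoMod_eq_toIcoMod hp).2
    ⟨toIcoDiv hp a₁ b - toIcoDiv hp a₂ c, by rw [toIcoMod, toIcoMod, sub_smul]; abel⟩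

theorem Mmod_eq_toIcoMod {lam : ℝ} (hlam : 0 < lam) (g : ℝ) :
    Mmod lam g = toIcoMod (mul_pos two_pos hlam) (-lam) g := by
  have hshift : (g - -lam) / (2 * lam) = g / (2 * lam) + 1 / 2 := by
    field_simp
    ring
  rw [toIcoMod_eq_add_fract_mul, hshift, Mmod]
  ring

theorem itoh_unwrapping (lam : ℝ) (hlam : 0 < lam) (f : ℤ → ℝ)
    (hItoh : ∀ k : ℤ, |f (k + 1) - f k| < lam) :
    ∀ k : ℤ, f (k + 1) - f k = Mmod lam (Mmod lam (f (k + 1)) - Mmod lam (f k)) := by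
  intro k
  obtain ⟨hlow, hhigh⟩ := abs_lt.1 (hItoh k)
  simp only [Mmod_eq_toIcoMod hlam, toIcoMod_sub_toIcoMod]
  refine ((toIcoMod_eq_self _).2 ⟨hlow.le, ?_⟩).symm
  linarith
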